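/- (Proposition A) For the unique value function f of the 3PG, f(111110 | {2,3}) = 4, f(111110 | {1,2}) = 6, and f(111110 | {1,3}) = 6; i.e., in the states where every win-lose relation except '3 beats 2' has occurred, the value is 4 when players 2 and 3 are in the ring, and 6 when the ring is {1,2} or {1,3}. -/
import Mathlib


/-- A state of the three-player game (3PG): `beats i j` records whether the event
"player `i` has beaten player `j`" has occurred, and `ring` is the (unordered)
pair of the two players currently in the ring. -/
structure PGState where
  beats : Fin 3 → Fin 3 → Bool
  ring : Finset (Fin 3)
  card_ring : ring.card = 2

/-- A state is terminal if all six win-lose relations have occurred. -/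
def PGState.Terminal (S : PGState) : Prop :=
  ∀ i j : Fin 3, i ≠ j → S.beats i j = true

/-- The successor state in which player `w` beats player `l` in the current round
and the third player `t` enters the ring. -/
def PGState.succ (S : PGState) (w l t : Fin 3) (hwt : w ≠ t) : PGState :=
  ⟨fun i j => if i = w ∧ j = l then true else S.beats i j, {w, t}, Finset.card_pair hwt⟩

/-- `f` is a value function for the 3PG: it vanishes on terminal states and
satisfies the reduction rule `f S = 1 + (f S₁ + f S₂)/2` on non-terminal states,
where `S₁` and `S₂` are the two successors of `S`. -/
def IsValueFn (f : PGState → ℝ) : Prop :=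
  (∀ S : PGState, S.Terminal → f S = 0) ∧
  ∀ (S : PGState) (t₁ t₂ t₃ : Fin 3) (_ : t₁ ≠ t₂) (h₁₃ : t₁ ≠ t₃) (h₂₃ : t₂ ≠ t₃),
    S.ring = {t₁, t₂} → ¬ S.Terminal →
    f S = 1 + (f (S.succ t₁ t₂ t₃ h₁₃) + f (S.succ t₂ t₁ t₃ h₂₃)) / 2

/-- The win-lose record `(b₁b₂b₃b₄b₅b₆)`, where the six bits indicate whether the
relations "1 beats 2", "2 beats 1", "1 beats 3", "3 beats 1", "2 beats 3",
"3 beats 2" have occurred (players 1, 2, 3 are `0, 1, 2 : Fin 3`). -/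
def mkBeats (b₁ b₂ b₃ b₄ b₅ b₆ : Bool) : Fin 3 → Fin 3 → Bool := fun i j =>
  if i = 0 ∧ j = 1 then b₁
  else if i = 1 ∧ j = 0 then b₂
  else if i = 0 ∧ j = 2 then b₃
  else if i = 2 ∧ j = 0 then b₄
  else if i = 1 ∧ j = 2 then b₅
  else if i = 2 ∧ j = 1 then b₆
  else false

/-- The state `(b₁b₂b₃b₄b₅b₆ | {t₁, t₂})`. -/
def mkState (b₁ b₂ b₃ b₄ b₅ b₆ : Bool) (t₁ t₂ : Fin 3) (h : t₁ ≠ t₂ := by decide) :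
    PGState :=
  ⟨mkBeats b₁ b₂ b₃ b₄ b₅ b₆, {t₁, t₂}, Finset.card_pair h⟩

theorem pg_ext {S T : PGState} (hb : S.beats = T.beats) (hr : S.ring = T.ring) : S = T := by
  cases S; cases T; simp_all

/-- Proposition A: `f(111110|{2,3}) = 4`, `f(111110|{1,2}) = 6`, `f(111110|{1,3}) = 6`. -/
theorem threePG_propA (f : PGState → ℝ) (hf : IsValueFn f) :
    f (mkState true true true true true false 1 2) = 4 ∧
    f (mkState true true true true true false 0 1) = 6 ∧
    f (mkState true true true true true false 0 2) = 6 := by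
  obtain ⟨hterm, hrec⟩ := hf
  have eA := hrec (mkState true true true true true false 1 2) 1 2 0
    (by decide) (by decide) (by decide) rfl (by simp only [PGState.Terminal]; decide)
  have eB := hrec (mkState true true true true true false 0 1) 0 1 2
    (by decide) (by decide) (by decide) rfl (by simp only [PGState.Terminal]; decide)
  have eC := hrec (mkState true true true true true false 0 2) 0 2 1
    (by decide) (by decide) (by decide) rfl (by simp only [PGState.Terminal]; decide)
  have h1 : (mkState true true true true true false 1 2).succ 1 2 0 (by decide)
      = mkState true true true true true false 0 1 := pg_ext (by decide) (by decide)
  have h2 : f ((mkState true true true true true false 1 2).succ 2 1 0 (by decide)) = 0 :=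
    hterm _ (by simp only [PGState.Terminal]; decide)
  have h3 : (mkState true true true true true false 0 1).succ 0 1 2 (by decide)
      = mkState true true true true true false 0 2 := pg_ext (by decide) (by decide)
  have h4 : (mkState true true true true true false 0 1).succ 1 0 2 (by decide)
      = mkState true true true true true false 1 2 := pg_ext (by decide) (by decide)
  have h5 : (mkState true true true true true false 0 2).succ 0 2 1 (by decide)
      = mkState true true true true true false 0 1 := pg_ext (by decide) (by decide)
  have h6 : (mkState true true true true true false 0 2).succ 2 0 1 (by decide)
      = mkState true true true true true false 1 2 := pg_ext (by decide) (by decide)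
  rw [h1, h2] at eA
  rw [h3, h4] at eB
  rw [h5, h6] at eC
  refine ⟨by linarith, by linarith, by linarith⟩
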